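/- Let v : D → [0,1] be a function on the open unit disc which is subharmonic, C² near the origin, with v(0) = 0, and such that log v is subharmonic on D (with value −∞ where v = 0). Then Δv(0) ≤ 4. -/

import Mathlib

open Metric MeasureTheory

/-- The Laplacian `Δv = v_xx + v_yy` of a function `v : ℂ → ℝ`. -/
noncomputable def lap (v : ℂ → ℝ) (z : ℂ) : ℝ :=
  fderiv ℝ (fun w => fderiv ℝ v w 1) z 1 +
  fderiv ℝ (fun w => fderiv ℝ v w Complex.I) z Complex.I

/-- A real-valued function is subharmonic on a set `s` if it is upper-semicontinuous on
`s` and satisfies the sub-mean value inequality on every closed disc contained in `s`. -/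
def SubharmonicOnR (u : ℂ → ℝ) (s : Set ℂ) : Prop :=
  UpperSemicontinuousOn u s ∧
  ∀ z ∈ s, ∀ r : ℝ, 0 < r → closedBall z r ⊆ s →
    u z ≤ (1 / (2 * Real.pi)) *
      ∫ t in (0:ℝ)..(2 * Real.pi), u (z + r * Complex.exp (t * Complex.I))

/-- A function `h` is harmonic on `s` if it is `C²` there with vanishing Laplacian. -/
def HarmonicOnR (h : ℂ → ℝ) (s : Set ℂ) : Prop :=
  ContDiffOn ℝ 2 h s ∧ ∀ z ∈ s, lap h z = 0

/-- An `EReal`-valued function (allowing the value `−∞`) is subharmonic on `s` in the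
extended sense if it is upper-semicontinuous on `s` and, on every closed disc in `s`, it
is majorized by each continuous function harmonic inside the disc that dominates it on
the boundary circle. -/
def ESubharmonicOn (u : ℂ → EReal) (s : Set ℂ) : Prop :=
  UpperSemicontinuousOn u s ∧
  ∀ (c : ℂ) (r : ℝ), 0 < r → closedBall c r ⊆ s →
    ∀ h : ℂ → ℝ, ContinuousOn h (closedBall c r) → HarmonicOnR h (ball c r) →
      (∀ z ∈ sphere c r, u z ≤ (h z : EReal)) →
      ∀ z ∈ closedBall c r, u z ≤ (h z : EReal)

/-- The extended-real logarithm, with `log 0 = −∞`. -/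
noncomputable def elog (x : ℝ) : EReal :=
  if x = 0 then ⊥ else ((Real.log x : ℝ) : EReal)

/-!
Near `0`, `v` is `C²` with a minimum, so `v(z) ≤ K |z|²`. On an annulus `ρ ≤ |z| ≤ r < 1`,
compare `log v` with the harmonic function `a log |z| + b` that is `log (K ρ²)` on the inner
circle and `0` on the outer one (where `v ≤ 1`); as `ρ → 0` its coefficient `a` tends to `2`, and
letting then `r → 1` gives `v(z) ≤ |z|²` on the disc. Since `v(0) = 0` and `Dv(0) = 0`, the second
derivatives of `v` at `0` in the directions `1` and `i` are then at most `2`.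

The comparison uses only the definition of subharmonicity of `log v`: maximise
`v · exp(ε |z|² - a log |z| - b)` over the annulus; at an interior maximum, the sub-harmonic
comparison on a small circle contradicts the strict subharmonicity of `ε |z|²`.
-/

open Set Filter Topology Complex ComplexConjugate

lemma elog_le_coe_iff {x y : ℝ} (hx : 0 ≤ x) : elog x ≤ y ↔ x ≤ Real.exp y := by
  rcases hx.eq_or_lt with rfl | hx
  · simp [elog, (Real.exp_pos y).le]
  · rw [elog, if_neg hx.ne', EReal.coe_le_coe_iff, Real.log_le_iff_le_exp hx]

lemma elog_lt_coe_iff {x y : ℝ} (hx : 0 ≤ x) : elog x < y ↔ x < Real.exp y := by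
  rcases hx.eq_or_lt with rfl | hx
  · simp [elog, Real.exp_pos y]
  · rw [elog, if_neg hx.ne', EReal.coe_lt_coe_iff, Real.log_lt_iff_lt_exp hx]

lemma upperSemicontinuousOn_mul_exp {S : Set ℂ} {v φ : ℂ → ℝ} (hv : ∀ z ∈ S, 0 ≤ v z)
    (hlog : UpperSemicontinuousOn (fun z => elog (v z)) S) (hφ : ContinuousOn φ S) :
    UpperSemicontinuousOn (fun z => v z * Real.exp (φ z)) S := by
  intro x hx y hy
  have hy0 : 0 < y := (mul_nonneg (hv x hx) (Real.exp_pos _).le).trans_lt hy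
  have hlt : elog (v x) < ((Real.log y - φ x : ℝ) : EReal) := by
    rw [elog_lt_coe_iff (hv x hx), Real.exp_sub, Real.exp_log hy0, lt_div_iff₀ (Real.exp_pos _)]
    exact hy
  obtain ⟨m, hvm, hmy⟩ := EReal.lt_iff_exists_real_btwn.1 hlt
  have hφm : φ x < Real.log y - m := by linarith [EReal.coe_lt_coe_iff.1 hmy]
  filter_upwards [hlog x hx m hvm, (hφ x hx).eventually_lt_const hφm, self_mem_nhdsWithin]
    with z hvz hφz hz
  rw [elog_lt_coe_iff (hv z hz)] at hvz
  calc v z * Real.exp (φ z) < Real.exp m * Real.exp (φ z) :=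
        mul_lt_mul_of_pos_right hvz (Real.exp_pos _)
    _ ≤ Real.exp m * Real.exp (Real.log y - m) := by gcongr
    _ = y := by rw [← Real.exp_add, add_sub_cancel, Real.exp_log hy0]

lemma fderiv_re_apply {F : ℂ → ℂ} {z : ℂ} (hF : DifferentiableAt ℂ F z) (e : ℂ) :
    fderiv ℝ (fun w => (F w).re) z e = (deriv F z * e).re := by
  have h : HasFDerivAt (fun w => (F w).re) (reCLM.comp (deriv F z • (1 : ℂ →L[ℝ] ℂ))) z :=
    reCLM.hasFDerivAt.comp z hF.hasDerivAt.complexToReal_fderiv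
  rw [h.fderiv]
  simp [mul_comm]

lemma fderiv_fderiv_re_apply {F : ℂ → ℂ} {U : Set ℂ} (hU : IsOpen U)
    (hF : DifferentiableOn ℂ F U) {z : ℂ} (hz : z ∈ U) (e : ℂ) :
    fderiv ℝ (fun w => fderiv ℝ (fun w => (F w).re) w e) z e = (deriv (deriv F) z * e * e).re := by
  have hF' : DifferentiableOn ℂ (deriv F) U := (hF.analyticOnNhd hU).deriv.differentiableOn
  have heq : (fun w => fderiv ℝ (fun w => (F w).re) w e) =ᶠ[𝓝 z] fun w => (deriv F w * e).re := by
    filter_upwards [hU.mem_nhds hz] with w hw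
    exact fderiv_re_apply (hF.differentiableAt (hU.mem_nhds hw)) e
  have hFe : DifferentiableAt ℂ (fun w => deriv F w * e) z :=
    (hF'.differentiableAt (hU.mem_nhds hz)).mul_const e
  rw [heq.fderiv_eq, fderiv_re_apply hFe,
    deriv_mul_const (hF'.differentiableAt (hU.mem_nhds hz))]

lemma harmonicOnR_re {F : ℂ → ℂ} {U : Set ℂ} (hU : IsOpen U) (hF : DifferentiableOn ℂ F U) :
    HarmonicOnR (fun w => (F w).re) U := by
  refine ⟨reCLM.contDiff.comp_contDiffOn ((hF.contDiffOn hU).restrict_scalars ℝ), fun z hz => ?_⟩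
  rw [lap, fderiv_fderiv_re_apply hU hF hz, fderiv_fderiv_re_apply hU hF hz]
  simp [mul_assoc]

lemma sq_norm_eq_sq_norm_sub (c w : ℂ) :
    ‖w‖ ^ 2 = ‖w - c‖ ^ 2 - ‖c‖ ^ 2 + 2 * (conj c * w).re := by
  simp only [Complex.sq_norm, Complex.normSq_apply, Complex.mul_re, Complex.conj_re,
    Complex.conj_im, Complex.sub_re, Complex.sub_im]
  ring

lemma eventually_log_norm_eq_re_log_div {z₀ : ℂ} (hz₀ : z₀ ≠ 0) :
    ∀ᶠ w in 𝓝 z₀, DifferentiableAt ℂ (fun w => Complex.log (w / z₀)) w ∧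
      Real.log ‖w‖ = (Complex.log (w / z₀)).re + Real.log ‖z₀‖ := by
  have hslit : ∀ᶠ w in 𝓝 z₀, w / z₀ ∈ slitPlane :=
    (continuous_id.div_const z₀).continuousAt.preimage_mem_nhds
      (isOpen_slitPlane.mem_nhds (by simp [div_self hz₀]))
  filter_upwards [hslit] with w hw
  have hw0 : w ≠ 0 := by simpa [hz₀] using slitPlane_ne_zero hw
  refine ⟨(differentiableAt_id.div_const z₀).clog hw, ?_⟩
  rw [Complex.log_re, norm_div, Real.log_div (norm_ne_zero_iff.2 hw0) (norm_ne_zero_iff.2 hz₀),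
    sub_add_cancel]

lemma tendsto_log_mul_sq_div_log_sub {K r : ℝ} (hK : 0 < K) :
    Tendsto (fun ρ => Real.log (K * ρ ^ 2) / (Real.log ρ - Real.log r)) (𝓝[>] 0) (𝓝 2) := by
  have hden : Tendsto (fun ρ => Real.log ρ - Real.log r) (𝓝[>] 0) atBot :=
    tendsto_atBot_add_const_right _ _ Real.tendsto_log_nhdsGT_zero
  have hlim := (tendsto_const_nhds (x := Real.log K + 2 * Real.log r)).div_atBot hden
  rw [← add_zero (2 : ℝ)]
  refine (tendsto_const_nhds.add hlim).congr' ?_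
  filter_upwards [hden.eventually_ne_atBot 0, self_mem_nhdsWithin] with ρ hρ hρ0
  rw [Real.log_mul hK.ne' (pow_ne_zero 2 (ne_of_gt hρ0)), Real.log_pow]
  field_simp
  push_cast
  ring

section SecondOrder

variable {E : Type*} [NormedAddCommGroup E] [NormedSpace ℝ E]

lemma isBigO_sub_sq_of_fderiv_eq_zero {F : Type*} [NormedAddCommGroup F] [NormedSpace ℝ F]
    {f : E → F} {x : E} (hf : ∀ᶠ y in 𝓝 x, DifferentiableAt ℝ f y)
    (hf' : DifferentiableAt ℝ (fderiv ℝ f) x) (h0 : fderiv ℝ f x = 0) :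
    (fun y => f y - f x) =O[𝓝 x] fun y => ‖y - x‖ ^ 2 := by
  obtain ⟨C, hC0, hC⟩ := hf'.hasFDerivAt.isBigO_sub.exists_pos
  obtain ⟨δ, hδ, hball⟩ := Metric.eventually_nhds_iff_ball.1 (hf.and hC.bound)
  refine Asymptotics.IsBigO.of_bound C ?_
  filter_upwards [ball_mem_nhds x hδ] with y hy
  have hsub : closedBall x ‖y - x‖ ⊆ ball x δ :=
    closedBall_subset_ball (by rwa [← dist_eq_norm, ← mem_ball])
  have hmv := (convex_closedBall x ‖y - x‖).norm_image_sub_le_of_norm_fderiv_le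
    (C := C * ‖y - x‖) (fun w hw => (hball w (hsub hw)).1) (fun w hw => ?_)
    (mem_closedBall_self (norm_nonneg _)) (mem_closedBall.2 (dist_eq_norm y x).le)
  · rw [Real.norm_of_nonneg (sq_nonneg _)]
    linarith
  · have hw' := (hball w (hsub hw)).2
    rw [h0, sub_zero] at hw'
    exact hw'.trans (mul_le_mul_of_nonneg_left (by rwa [← dist_eq_norm]) hC0.le)

lemma fderiv_fderiv_apply_le_of_le_sq {f : E → ℝ} {x : E} {c : ℝ}
    (hf : ∀ᶠ y in 𝓝 x, DifferentiableAt ℝ f y) (hf' : DifferentiableAt ℝ (fderiv ℝ f) x)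
    (h0 : fderiv ℝ f x = 0) (hle : ∀ᶠ y in 𝓝 x, f y ≤ f x + c * ‖y - x‖ ^ 2) (e : E) :
    fderiv ℝ (fderiv ℝ f) x e e ≤ 2 * c * ‖e‖ ^ 2 := by
  set f'' := fderiv ℝ (fderiv ℝ f) x
  obtain ⟨δ, hδ, hball⟩ := Metric.eventually_nhds_iff_ball.1 hf
  suffices h : ∀ w : E, ‖w‖ < δ → f'' w w ≤ 2 * c * ‖w‖ ^ 2 by
    set t := δ / (‖e‖ + 1)
    have ht : 0 < t := by positivity
    have hte : ‖t • e‖ < δ := by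
      rw [norm_smul, Real.norm_of_nonneg ht.le, div_mul_eq_mul_div, div_lt_iff₀ (by positivity)]
      nlinarith
    have := h _ hte
    rw [map_smul, map_smul, smul_apply, norm_smul, Real.norm_of_nonneg ht.le,
      smul_eq_mul, smul_eq_mul] at this
    nlinarith [pow_pos ht 2]
  intro w hw
  have htaylor := (convex_ball x δ).taylor_approx_two_segment (f' := fderiv ℝ f) (f'' := f'')
    (v := 0) (w := w) (fun y hy => (hball y (interior_subset hy)).hasFDerivAt)
    (mem_ball_self hδ) hf'.hasFDerivAt.hasFDerivWithinAt
    (by simpa [isOpen_ball.interior_eq] using hδ) (by simpa [isOpen_ball.interior_eq] using hw)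
  simp only [smul_zero, add_zero, h0, map_zero, zero_apply, mul_zero,
    sub_zero, smul_eq_mul] at htaylor
  by_contra! hlt
  have hη : 0 < (f'' w w - 2 * c * ‖w‖ ^ 2) / 4 := by linarith
  have hpath : Tendsto (fun h : ℝ => x + h • w) (𝓝[>] 0) (𝓝 x) := by
    have : Continuous fun h : ℝ => x + h • w := by fun_prop
    simpa using (this.tendsto 0).mono_left nhdsWithin_le_nhds
  obtain ⟨h, hbound, hfle, hpos⟩ := ((htaylor.bound hη).and ((hpath.eventually hle).and
    self_mem_nhdsWithin)).exists
  rw [add_sub_cancel_left, norm_smul, mul_pow, Real.norm_eq_abs, sq_abs] at hfle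
  rw [Real.norm_of_nonneg (sq_nonneg h)] at hbound
  have hh : 0 < h ^ 2 := pow_pos hpos 2
  nlinarith [(abs_le.1 hbound).1, mul_pos hh hη]

end SecondOrder

lemma lap_eq_fderiv_fderiv {v : ℂ → ℝ} {z : ℂ} (hv : DifferentiableAt ℝ (fderiv ℝ v) z) :
    lap v z = fderiv ℝ (fderiv ℝ v) z 1 1 + fderiv ℝ (fderiv ℝ v) z I I := by
  rw [lap, fderiv_clm_apply hv (differentiableAt_const _),
    fderiv_clm_apply hv (differentiableAt_const _)]
  simp

namespace ESubharmonicOn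

variable {U : Set ℂ} {v : ℂ → ℝ}

lemma apply_le_exp_re (hlog : ESubharmonicOn (fun z => elog (v z)) U)
    (hv : ∀ z ∈ U, 0 ≤ v z) {G : ℂ → ℂ} {c : ℂ} {s : ℝ} (hs : 0 < s)
    (hsU : closedBall c s ⊆ U) (hG : ∀ w ∈ closedBall c s, DifferentiableAt ℂ G w)
    (hbd : ∀ w ∈ sphere c s, v w ≤ Real.exp (G w).re) :
    v c ≤ Real.exp (G c).re := by
  have hGball : DifferentiableOn ℂ G (ball c s) := fun w hw =>
    (hG w (ball_subset_closedBall hw)).differentiableWithinAt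
  have hcont : ContinuousOn (fun w => (G w).re) (closedBall c s) := fun w hw =>
    Complex.continuous_re.continuousAt.comp_continuousWithinAt
      (hG w hw).continuousAt.continuousWithinAt
  have hc : c ∈ closedBall c s := mem_closedBall_self hs.le
  rw [← elog_le_coe_iff (hv c (hsU hc))]
  refine hlog.2 c s hs hsU _ hcont (harmonicOnR_re isOpen_ball hGball) (fun w hw => ?_) c hc
  exact (elog_le_coe_iff (hv w (hsU (sphere_subset_closedBall hw)))).2 (hbd w hw)

/-- The perturbation `ε ‖w‖²` is what makes the comparison strict: on the sphere it agrees
with a harmonic function that exceeds it by `ε s²` at the centre. -/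
lemma eq_zero_of_mul_exp_le_center (hlog : ESubharmonicOn (fun z => elog (v z)) U)
    (hv : ∀ z ∈ U, 0 ≤ v z) {F : ℂ → ℂ} {c : ℂ} {s ε : ℝ} (hs : 0 < s) (hε : 0 < ε)
    (hsU : closedBall c s ⊆ U) (hF : ∀ w ∈ closedBall c s, DifferentiableAt ℂ F w)
    (hmax : ∀ w ∈ sphere c s, v w * Real.exp (ε * ‖w‖ ^ 2 - (F w).re) ≤
      v c * Real.exp (ε * ‖c‖ ^ 2 - (F c).re)) :
    v c = 0 := by
  set M := v c * Real.exp (ε * ‖c‖ ^ 2 - (F c).re)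
  by_contra hvc
  have hM : 0 < M :=
    mul_pos ((hv c (hsU (mem_closedBall_self hs.le))).lt_of_ne' hvc) (Real.exp_pos _)
  set G : ℂ → ℂ := fun w =>
    F w + ((Real.log M + ε * (‖c‖ ^ 2 - s ^ 2) : ℝ) : ℂ) - ((2 * ε : ℝ) : ℂ) * (conj c * w)
  have hGre : ∀ w, (G w).re = (F w).re + Real.log M - ε * (‖w‖ ^ 2 - ‖w - c‖ ^ 2 + s ^ 2) := by
    intro w
    simp only [G, Complex.sub_re, Complex.add_re, Complex.ofReal_re, Complex.re_ofReal_mul,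
      sq_norm_eq_sq_norm_sub c w]
    ring
  have hG : ∀ w ∈ closedBall c s, DifferentiableAt ℂ G w := fun w hw =>
    ((hF w hw).add_const _).sub ((differentiableAt_id.const_mul _).const_mul _)
  have hbd : ∀ w ∈ sphere c s, v w ≤ Real.exp (G w).re := by
    intro w hw
    rw [hGre, ← dist_eq_norm, mem_sphere.1 hw, show (F w).re + Real.log M -
      ε * (‖w‖ ^ 2 - s ^ 2 + s ^ 2) = Real.log M - (ε * ‖w‖ ^ 2 - (F w).re) by ring,
      Real.exp_sub, Real.exp_log hM, le_div_iff₀ (Real.exp_pos _)]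
    exact hmax w hw
  have hcenter := apply_le_exp_re hlog hv hs hsU hG hbd
  rw [hGre, sub_self, norm_zero] at hcenter
  have : M ≤ M * Real.exp (-(ε * s ^ 2)) := by
    calc M ≤ Real.exp ((F c).re + Real.log M - ε * (‖c‖ ^ 2 - 0 ^ 2 + s ^ 2)) *
          Real.exp (ε * ‖c‖ ^ 2 - (F c).re) :=
          mul_le_mul_of_nonneg_right hcenter (Real.exp_pos _).le
      _ = M * Real.exp (-(ε * s ^ 2)) := by
          rw [← Real.exp_add, show (F c).re + Real.log M - ε * (‖c‖ ^ 2 - 0 ^ 2 + s ^ 2) +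
            (ε * ‖c‖ ^ 2 - (F c).re) = Real.log M + -(ε * s ^ 2) by ring, Real.exp_add,
            Real.exp_log hM]
  have : Real.exp (-(ε * s ^ 2)) < 1 := Real.exp_lt_one_iff.2 (neg_neg_of_pos (by positivity))
  nlinarith

/-- Maximum principle; `B` plays the role of the boundary of `A`. -/
lemma le_exp_of_le_exp_on_boundary (hlog : ESubharmonicOn (fun z => elog (v z)) U)
    (hv : ∀ z ∈ U, 0 ≤ v z) {A B : Set ℂ} (hA : IsCompact A) (hAU : A ⊆ U) {φ : ℂ → ℝ}
    (hφ : ContinuousOn φ A)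
    (hint : ∀ z ∈ A \ B, A ∈ 𝓝 z ∧
      ∃ F : ℂ → ℂ, ∀ᶠ w in 𝓝 z, DifferentiableAt ℂ F w ∧ φ w = (F w).re)
    (hB : ∀ z ∈ A ∩ B, v z ≤ Real.exp (φ z)) {z : ℂ} (hz : z ∈ A) :
    v z ≤ Real.exp (φ z) := by
  obtain ⟨R, hR⟩ := hA.isBounded.exists_norm_le
  have key : ∀ ε > 0, v z ≤ Real.exp (φ z + ε * R ^ 2) := by
    intro ε hε
    set ψ := fun w => v w * Real.exp (ε * ‖w‖ ^ 2 - φ w)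
    have hψ : UpperSemicontinuousOn ψ A :=
      upperSemicontinuousOn_mul_exp (fun w hw => hv w (hAU hw)) (hlog.1.mono hAU)
        ((continuous_const.mul (continuous_norm.pow 2)).continuousOn.sub hφ)
    obtain ⟨z₁, hz₁, hmax⟩ := hψ.exists_isMaxOn ⟨z, hz⟩ hA
    have hψ₁ : ψ z₁ ≤ Real.exp (ε * R ^ 2) := by
      by_cases hz₁B : z₁ ∈ B
      · calc ψ z₁ ≤ Real.exp (φ z₁) * Real.exp (ε * ‖z₁‖ ^ 2 - φ z₁) :=
              mul_le_mul_of_nonneg_right (hB z₁ ⟨hz₁, hz₁B⟩) (Real.exp_pos _).le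
          _ = Real.exp (ε * ‖z₁‖ ^ 2) := by rw [← Real.exp_add, add_sub_cancel]
          _ ≤ Real.exp (ε * R ^ 2) := by gcongr; exact hR z₁ hz₁
      · obtain ⟨hAz₁, F, hF⟩ := hint z₁ ⟨hz₁, hz₁B⟩
        obtain ⟨t, ht, hball⟩ := Metric.eventually_nhds_iff_ball.1 (hF.and hAz₁)
        have hsub : closedBall z₁ (t / 2) ⊆ ball z₁ t := closedBall_subset_ball (half_lt_self ht)
        have hφ₁ : φ z₁ = (F z₁).re := (hball z₁ (mem_ball_self ht)).1.2
        have hvz₁ : v z₁ = 0 := by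
          refine hlog.eq_zero_of_mul_exp_le_center hv (half_pos ht) hε
            (fun w hw => hAU (hball w (hsub hw)).2) (fun w hw => (hball w (hsub hw)).1.1)
            (fun w hw => ?_)
          obtain ⟨⟨-, hφw⟩, hwA⟩ := hball w (hsub (sphere_subset_closedBall hw))
          rw [← hφw, ← hφ₁]
          exact hmax hwA
        simp only [ψ, hvz₁, zero_mul]
        positivity
    calc v z = ψ z * Real.exp (φ z - ε * ‖z‖ ^ 2) := by
          rw [mul_assoc, ← Real.exp_add, sub_add_sub_cancel', sub_self, Real.exp_zero, mul_one]
      _ ≤ Real.exp (ε * R ^ 2) * Real.exp (φ z) :=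
          mul_le_mul ((hmax hz).trans hψ₁) (Real.exp_le_exp.2 (by nlinarith))
            (Real.exp_pos _).le (Real.exp_pos _).le
      _ = Real.exp (φ z + ε * R ^ 2) := by rw [← Real.exp_add, add_comm]
  have hlim : Tendsto (fun ε : ℝ => Real.exp (φ z + ε * R ^ 2)) (𝓝[>] 0) (𝓝 (Real.exp (φ z))) := by
    have := ((by fun_prop : Continuous fun ε : ℝ => Real.exp (φ z + ε * R ^ 2)).tendsto 0)
    simpa using this.mono_left nhdsWithin_le_nhds
  exact ge_of_tendsto hlim (eventually_nhdsWithin_of_forall key)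

/-- The exponent is the affine function of `log ‖z‖` equal to `log m` on the inner circle and
to `0` on the outer one. -/
lemma le_exp_of_annulus (hlog : ESubharmonicOn (fun z => elog (v z)) U)
    (hv : ∀ z ∈ U, 0 ≤ v z) {ρ r m : ℝ} (hρ : 0 < ρ) (hρr : ρ < r) (hrU : closedBall 0 r ⊆ U)
    (hm : 0 < m) (hinner : ∀ z : ℂ, ‖z‖ = ρ → v z ≤ m) (houter : ∀ z : ℂ, ‖z‖ = r → v z ≤ 1)
    {z : ℂ} (hρz : ρ ≤ ‖z‖) (hzr : ‖z‖ ≤ r) :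
    v z ≤ Real.exp (Real.log m / (Real.log ρ - Real.log r) * (Real.log ‖z‖ - Real.log r)) := by
  set a := Real.log m / (Real.log ρ - Real.log r)
  have hA : IsCompact (norm ⁻¹' Icc ρ r : Set ℂ) :=
    (isCompact_closedBall (0 : ℂ) r).of_isClosed_subset (isClosed_Icc.preimage continuous_norm)
      fun w hw => mem_closedBall_zero_iff.2 hw.2
  refine hlog.le_exp_of_le_exp_on_boundary hv (B := {w | ‖w‖ = ρ ∨ ‖w‖ = r})
    (φ := fun w => a * (Real.log ‖w‖ - Real.log r)) hA
    (fun w hw => hrU (mem_closedBall_zero_iff.2 hw.2)) ?_ ?_ ?_ ⟨hρz, hzr⟩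
  · exact continuousOn_const.mul ((Real.continuousOn_log.comp continuous_norm.continuousOn
      fun w hw => (hρ.trans_le hw.1).ne').sub continuousOn_const)
  · rintro w ⟨⟨hρw, hwr⟩, hwB⟩
    simp only [mem_ofPred_eq, not_or] at hwB
    have hρw := lt_of_le_of_ne hρw (Ne.symm hwB.1)
    have hwr := lt_of_le_of_ne hwr hwB.2
    refine ⟨mem_of_superset (continuous_norm.continuousAt.preimage_mem_nhds (Ioo_mem_nhds hρw hwr))
      fun _ h => Ioo_subset_Icc_self h, fun u => a * Complex.log (u / w) +
        ((a * (Real.log ‖w‖ - Real.log r) : ℝ) : ℂ), ?_⟩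
    filter_upwards [eventually_log_norm_eq_re_log_div (norm_pos_iff.1 (hρ.trans hρw))]
      with u ⟨hdiff, hlogu⟩
    refine ⟨(hdiff.const_mul _).add_const _, ?_⟩
    simp only [Complex.add_re, Complex.re_ofReal_mul, Complex.ofReal_re, hlogu]
    ring
  · rintro w ⟨-, hw | hw⟩
    · have hden : Real.log ρ - Real.log r ≠ 0 := (sub_neg.2 (Real.log_lt_log hρ hρr)).ne
      rw [hw, div_mul_cancel₀ _ hden, Real.exp_log hm]
      exact hinner w hw
    · rw [hw, sub_self, mul_zero, Real.exp_zero]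
      exact houter w hw

/-- Let the inner radius in `le_exp_of_annulus` tend to `0`. -/
lemma apply_le_sq_div_sq (hlog : ESubharmonicOn (fun z => elog (v z)) U)
    (hv : ∀ z ∈ U, 0 ≤ v z) {r K δ : ℝ} (hrU : closedBall 0 r ⊆ U)
    (houter : ∀ z : ℂ, ‖z‖ = r → v z ≤ 1) (hK : 0 < K) (hδ : 0 < δ)
    (hquad : ∀ z ∈ ball (0 : ℂ) δ, v z ≤ K * ‖z‖ ^ 2) {z : ℂ} (hz : ‖z‖ < r) :
    v z ≤ ‖z‖ ^ 2 / r ^ 2 := by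
  rcases eq_or_ne z 0 with rfl | hz0
  · simpa using hquad 0 (mem_ball_self hδ)
  have hz0 : 0 < ‖z‖ := norm_pos_iff.2 hz0
  have hr : 0 < r := hz0.trans hz
  set L := Real.log ‖z‖ - Real.log r
  have hlim : Tendsto (fun ρ => Real.exp (Real.log (K * ρ ^ 2) / (Real.log ρ - Real.log r) * L))
      (𝓝[>] 0) (𝓝 (Real.exp (2 * L))) :=
    (Real.continuous_exp.tendsto _).comp ((tendsto_log_mul_sq_div_log_sub hK).mul_const L)
  have hexp : Real.exp (2 * L) = ‖z‖ ^ 2 / r ^ 2 := by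
    rw [two_mul, Real.exp_add, Real.exp_sub, Real.exp_log hz0, Real.exp_log hr]
    ring
  rw [← hexp]
  refine ge_of_tendsto hlim ?_
  filter_upwards [Ioo_mem_nhdsGT (lt_min hδ hz0)] with ρ ⟨hρ, hρδz⟩
  have hρz : ρ < ‖z‖ := hρδz.trans_le (min_le_right _ _)
  refine hlog.le_exp_of_annulus hv hρ (hρz.trans hz) hrU (by positivity) (fun w hw => ?_) houter
    hρz.le hz.le
  rw [← hw]
  exact hquad w (mem_ball_zero_iff.2 (hw ▸ hρδz.trans_le (min_le_left _ _)))

lemma apply_le_sq_norm (hlog : ESubharmonicOn (fun z => elog (v z)) (ball 0 1))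
    (hrange : ∀ z ∈ ball (0 : ℂ) 1, v z ∈ Icc 0 1) {K δ : ℝ} (hK : 0 < K) (hδ : 0 < δ)
    (hquad : ∀ z ∈ ball (0 : ℂ) δ, v z ≤ K * ‖z‖ ^ 2) {z : ℂ} (hz : z ∈ ball (0 : ℂ) 1) :
    v z ≤ ‖z‖ ^ 2 := by
  have hz1 : ‖z‖ < 1 := mem_ball_zero_iff.1 hz
  have hlim : Tendsto (fun r : ℝ => ‖z‖ ^ 2 / r ^ 2) (𝓝[<] 1) (𝓝 (‖z‖ ^ 2)) := by
    have hc : ContinuousAt (fun r : ℝ => ‖z‖ ^ 2 / r ^ 2) 1 :=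
      continuousAt_const.div (continuousAt_id.pow 2) (by norm_num)
    simpa using hc.tendsto.mono_left nhdsWithin_le_nhds
  refine ge_of_tendsto hlim ?_
  filter_upwards [Ioo_mem_nhdsLT hz1] with r ⟨hzr, hr1⟩
  exact hlog.apply_le_sq_div_sq (fun w hw => (hrange w hw).1) (closedBall_subset_ball hr1)
    (fun w hw => (hrange w (mem_ball_zero_iff.2 (hw ▸ hr1))).2) hK hδ hquad hzr

end ESubharmonicOn

theorem stmt6_general (v : ℂ → ℝ)
    (hrange : ∀ z ∈ ball (0:ℂ) 1, v z ∈ Set.Icc (0:ℝ) 1)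
    (hC2 : ∃ ε > 0, ContDiffOn ℝ 2 v (ball (0:ℂ) ε))
    (hv0 : v 0 = 0)
    (hlog : ESubharmonicOn (fun z => elog (v z)) (ball (0:ℂ) 1)) :
    lap v 0 ≤ 4 := by
  obtain ⟨ε, hε, hC2⟩ := hC2
  have hv : ContDiffAt ℝ 2 v 0 := hC2.contDiffAt (ball_mem_nhds 0 hε)
  have hd : ∀ᶠ z in 𝓝 0, DifferentiableAt ℝ v z :=
    (hv.eventually (by simp)).mono fun z hz => hz.differentiableAt (by norm_num)
  have hd2 : DifferentiableAt ℝ (fderiv ℝ v) 0 :=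
    (hv.fderiv_right (m := 1) le_rfl).differentiableAt one_ne_zero
  have hmin : IsLocalMin v 0 := by
    filter_upwards [ball_mem_nhds (0 : ℂ) one_pos] with z hz
    exact hv0 ▸ (hrange z hz).1
  obtain ⟨K, hK, hO⟩ := (isBigO_sub_sq_of_fderiv_eq_zero hd hd2 hmin.fderiv_eq_zero).exists_pos
  obtain ⟨δ, hδ, hquad⟩ := Metric.eventually_nhds_iff_ball.1 hO.bound
  have hsq : ∀ z ∈ ball (0 : ℂ) 1, v z ≤ ‖z‖ ^ 2 := fun z hz =>
    hlog.apply_le_sq_norm hrange hK hδ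
      (fun w hw => by simpa [hv0] using (hquad w hw).trans' (le_abs_self _)) hz
  have hle : ∀ᶠ z in 𝓝 0, v z ≤ v 0 + 1 * ‖z - 0‖ ^ 2 := by
    filter_upwards [ball_mem_nhds (0 : ℂ) one_pos] with z hz
    simpa [hv0] using hsq z hz
  have h1 := fderiv_fderiv_apply_le_of_le_sq hd hd2 hmin.fderiv_eq_zero hle 1
  have hI := fderiv_fderiv_apply_le_of_le_sq hd hd2 hmin.fderiv_eq_zero hle I
  rw [lap_eq_fderiv_fderiv hd2]
  norm_num at h1 hI
  linarith

/-- Sibony's extremal estimate: if `v : D → [0,1]` is subharmonic on the unit disc, `C²`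
near the origin, `v(0) = 0`, and `log v` is subharmonic on `D` (with value `−∞` where
`v = 0`), then `Δv(0) ≤ 4`. -/
theorem stmt6 (v : ℂ → ℝ)
    (hrange : ∀ z ∈ ball (0:ℂ) 1, v z ∈ Set.Icc (0:ℝ) 1)
    (hsub : SubharmonicOnR v (ball (0:ℂ) 1))
    (hC2 : ∃ ε > 0, ContDiffOn ℝ 2 v (ball (0:ℂ) ε))
    (hv0 : v 0 = 0)
    (hlog : ESubharmonicOn (fun z => elog (v z)) (ball (0:ℂ) 1)) :
    lap v 0 ≤ 4 :=
  stmt6_general v hrange hC2 hv0 hlog
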